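/- arXiv:2212.05110 — 5 statements merged into one kernel-verified Lean document; each statement's English description precedes it below -/
import Mathlib

section
/- Let n ≥ 1, let A be an n×n integer matrix with determinant ±1, and let W ⊆ ℝⁿ be a nontrivial linear subspace with A·W = W such that every complex eigenvalue of the restriction of A to W has modulus greater than 1. If the image of W under the projection p : ℝⁿ → Tⁿ is dense in Tⁿ, then the induced automorphism f_A of Tⁿ is topologically transitive: for any two nonempty open sets U, V ⊆ Tⁿ there exists m ∈ ℕ such that f_A^m(U) ∩ V ≠ ∅. -/
open Matrix Polynomial
open scoped Classical

noncomputable section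

/-- The `n`-torus `ℝⁿ/ℤⁿ`, realized as `Fin n → ℝ/ℤ`. -/
abbrev Torus (n : ℕ) := Fin n → AddCircle (1 : ℝ)

/-- The projection `p : ℝⁿ → Tⁿ`. -/
def torusProj (n : ℕ) (x : Fin n → ℝ) : Torus n := fun i => (x i : AddCircle (1 : ℝ))

/-- The linear action of an integer matrix on `ℝⁿ`. -/
def realMulVec {n : ℕ} (A : Matrix (Fin n) (Fin n) ℤ) (x : Fin n → ℝ) : Fin n → ℝ :=
  (A.map (Int.cast : ℤ → ℝ)).mulVec x

/-- The complex eigenvalues (with multiplicity) of an integer matrix. -/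
def eigsC {n : ℕ} (A : Matrix (Fin n) (Fin n) ℤ) : Multiset ℂ :=
  ((A.map (Int.cast : ℤ → ℂ)).charpoly).roots

/-- A complex number is a root of unity if some positive power of it is `1`. -/
def IsRootOfUnity (z : ℂ) : Prop := ∃ k : ℕ, 1 ≤ k ∧ z ^ k = 1

/-!
An integer matrix expanding `W` contracts `W` under its inverse: by Gelfand's formula applied
to the complexified matrix, every orbit of `(A|_W)⁻¹` tends to `0`. Given `U ∋ p w₀` with
`w₀ ∈ W` and `V ∋ v`, compactness of the torus and density of `p(W)` give a finite `δ`-net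
`p(T)`, `T ⊆ W`; take `m` with `(A|_W)^{-m} T` inside the `ε`-ball. If `p w₁`, `w₁ ∈ T`, is
`δ`-close to `v - p(Aᵐ w₀)`, then `p(w₀ + (A|_W)^{-m} w₁) ∈ U` is mapped by `f_Aᵐ` to
`p(Aᵐ w₀) + p w₁ ∈ V`.
-/

open Filter Topology

theorem tendsto_pow_atTop_nhds_zero_of_spectrum_norm_lt_one {A : Type*} [NormedRing A]
    [NormedAlgebra ℂ A] [CompleteSpace A] {a : A} (ha : ∀ z ∈ spectrum ℂ a, ‖z‖ < 1) :
    Tendsto (a ^ ·) atTop (𝓝 0) := by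
  have hρ : spectralRadius ℂ a < 1 := by
    rcases subsingleton_or_nontrivial A with _ | _
    · simp [spectralRadius, spectrum.of_subsingleton]
    · simpa using spectrum.spectralRadius_lt_of_forall_lt a (r := 1)
        fun z hz => by exact_mod_cast ha z hz
  obtain ⟨r, hρr, hr1⟩ := ENNReal.lt_iff_exists_nnreal_btwn.mp hρ
  have hbound : ∀ᶠ n : ℕ in atTop, ‖a ^ n‖ ≤ (r : ℝ) ^ n := by
    filter_upwards [(spectrum.pow_nnnorm_pow_one_div_tendsto_nhds_spectralRadius a)
      |>.eventually_lt_const hρr, eventually_gt_atTop 0] with n hn hn0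
    have := ENNReal.rpow_lt_rpow hn (show (0 : ℝ) < n by positivity)
    rw [← ENNReal.rpow_mul, one_div_mul_cancel (by positivity), ENNReal.rpow_one,
      ENNReal.rpow_natCast, ← ENNReal.coe_pow, ENNReal.coe_lt_coe] at this
    exact_mod_cast this.le
  exact squeeze_zero_norm' hbound
    (tendsto_pow_atTop_nhds_zero_of_lt_one r.coe_nonneg (by exact_mod_cast hr1))

theorem Matrix.tendsto_pow_atTop_nhds_zero_of_spectrum_norm_lt_one {ι : Type*} [Fintype ι]
    [DecidableEq ι] {M : Matrix ι ι ℂ} (hM : ∀ z ∈ spectrum ℂ M, ‖z‖ < 1) :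
    Tendsto (M ^ ·) atTop (𝓝 0) := by
  let := Matrix.linftyOpNormedRing (n := ι) (α := ℂ)
  let := Matrix.linftyOpNormedAlgebra (n := ι) (α := ℂ) (R := ℂ)
  have : CompleteSpace (Matrix ι ι ℂ) := FiniteDimensional.complete ℂ _
  exact _root_.tendsto_pow_atTop_nhds_zero_of_spectrum_norm_lt_one hM

theorem LinearMap.tendsto_iterate_nhds_zero {E : Type*} [AddCommGroup E] [Module ℝ E]
    [FiniteDimensional ℝ E] [TopologicalSpace E] [ContinuousAdd E] [ContinuousSMul ℝ E]
    (f : E →ₗ[ℝ] E) (hf : ∀ z ∈ (f.charpoly.map (algebraMap ℝ ℂ)).roots, ‖z‖ < 1)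
    (x : E) :
    Tendsto (fun m => f^[m] x) atTop (𝓝 0) := by
  classical
  let b := Module.finBasis ℝ E
  let M := LinearMap.toMatrix b b f
  have hMc : ∀ z ∈ spectrum ℂ (M.map (algebraMap ℝ ℂ)), ‖z‖ < 1 := fun z hz => by
    rw [Matrix.mem_spectrum_iff_isRoot_charpoly, Matrix.charpoly_map,
      LinearMap.charpoly_toMatrix] at hz
    exact hf z ((Polynomial.mem_roots ((f.charpoly_monic.map _).ne_zero)).2 hz)
  have hM : Tendsto (M ^ ·) atTop (𝓝 0) := by
    have hre := ((continuous_id.matrix_map Complex.continuous_re).tendsto _).comp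
      (Matrix.tendsto_pow_atTop_nhds_zero_of_spectrum_norm_lt_one hMc)
    convert hre using 2 with m
    · rw [Function.comp_apply, id_eq, ← (algebraMap ℝ ℂ).mapMatrix_apply,
        ← map_pow (algebraMap ℝ ℂ).mapMatrix M m]
      ext i j; simp
    · ext i j; simp
  have hiter : ∀ m, f^[m] x = b.equivFun.symm ((M ^ m).mulVec (b.equivFun x)) := fun m => by
    rw [LinearMap.toMatrix_pow, Module.Basis.equivFun_apply, LinearMap.toMatrix_mulVec_repr,
      ← Module.Basis.equivFun_apply, LinearEquiv.symm_apply_apply, Module.End.pow_apply]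
  have hcont : Continuous fun P : Matrix _ _ ℝ => b.equivFun.symm (P.mulVec (b.equivFun x)) :=
    (LinearMap.continuous_on_pi b.equivFun.symm.toLinearMap).comp
      (continuous_id.matrix_mulVec continuous_const)
  simpa [hiter, Function.comp_def] using (hcont.tendsto 0).comp hM

theorem LinearEquiv.inv_mem_roots_charpoly_of_mem_roots_charpoly_symm {K L E : Type*} [Field K]
    [Field L] [Algebra K L] [AddCommGroup E] [Module K E] [FiniteDimensional K E]
    (g : E ≃ₗ[K] E) {z : L}
    (hz : z ∈ ((g.symm : E →ₗ[K] E).charpoly.map (algebraMap K L)).roots) :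
    z⁻¹ ∈ ((g : E →ₗ[K] E).charpoly.map (algebraMap K L)).roots := by
  classical
  let b := Module.finBasis K E
  let C := (algebraMap K L).mapMatrix (m := Fin (Module.finrank K E))
  let u : (Matrix (Fin (Module.finrank K E)) (Fin (Module.finrank K E)) L)ˣ :=
    { val := C (LinearMap.toMatrix b b g), inv := C (LinearMap.toMatrix b b g.symm)
      val_inv := by simp [← map_mul, ← LinearMap.toMatrix_mul, Module.End.mul_eq_comp]
      inv_val := by simp [← map_mul, ← LinearMap.toMatrix_mul, Module.End.mul_eq_comp] }
  have hspec : ∀ {h : E →ₗ[K] E} {w : L}, w ∈ (h.charpoly.map (algebraMap K L)).roots ↔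
      w ∈ spectrum L (C (LinearMap.toMatrix b b h)) := by
    intro h w
    rw [Matrix.mem_spectrum_iff_isRoot_charpoly, RingHom.mapMatrix_apply, Matrix.charpoly_map,
      LinearMap.charpoly_toMatrix, Polynomial.mem_roots (h.charpoly_monic.map _).ne_zero]
  rw [hspec] at hz ⊢
  change z ∈ spectrum L (u⁻¹).val at hz
  rwa [← spectrum.map_inv] at hz

theorem LinearEquiv.tendsto_symm_iterate_nhds_zero {E : Type*} [AddCommGroup E] [Module ℝ E]
    [FiniteDimensional ℝ E] [TopologicalSpace E] [ContinuousAdd E] [ContinuousSMul ℝ E]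
    (g : E ≃ₗ[ℝ] E)
    (hg : ∀ z ∈ ((g : E →ₗ[ℝ] E).charpoly.map (algebraMap ℝ ℂ)).roots, 1 < ‖z‖)
    (x : E) :
    Tendsto (fun m => g.symm^[m] x) atTop (𝓝 0) := by
  refine (g.symm : E →ₗ[ℝ] E).tendsto_iterate_nhds_zero (fun z hz => ?_) x
  have := hg _ (g.inv_mem_roots_charpoly_of_mem_roots_charpoly_symm hz)
  rw [norm_inv, one_lt_inv_iff₀] at this
  exact this.2

theorem LinearMap.restrict_surjective_of_map_eq {R M : Type*} [Semiring R] [AddCommMonoid M]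
    [Module R M] {f : M →ₗ[R] M} {p : Submodule R M} (hf : ∀ x ∈ p, f x ∈ p)
    (hp : p.map f = p) : Function.Surjective (f.restrict hf) := by
  rintro ⟨y, hy⟩
  obtain ⟨x, hx, rfl⟩ : y ∈ p.map f := by rwa [hp]
  exact ⟨⟨x, hx⟩, rfl⟩

theorem DenseRange.exists_finset_forall_exists_dist_lt {α X : Type*} [PseudoMetricSpace X]
    [CompactSpace X] {f : α → X} (hf : DenseRange f) {ε : ℝ} (hε : 0 < ε) :
    ∃ T : Finset α, ∀ x, ∃ a ∈ T, dist x (f a) < ε := by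
  obtain ⟨T, hT⟩ := isCompact_univ.elim_finite_subcover (fun a => Metric.ball (f a) ε)
    (fun _ => Metric.isOpen_ball) fun x _ => Set.mem_iUnion.2 (hf.exists_dist_lt x hε)
  exact ⟨T, fun x => by simpa using hT (Set.mem_univ x)⟩

theorem torusProj_add (n : ℕ) (x y : Fin n → ℝ) :
    torusProj n (x + y) = torusProj n x + torusProj n y := rfl

theorem norm_torusProj_le (n : ℕ) (x : Fin n → ℝ) : ‖torusProj n x‖ ≤ ‖x‖ :=
  (pi_norm_le_iff_of_nonneg (norm_nonneg x)).2 fun i =>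
    QuotientAddGroup.norm_mk_le_norm.trans (norm_le_pi_norm x i)

theorem transitive_of_dense_unstable_general {n : ℕ}
    (A : Matrix (Fin n) (Fin n) ℤ)
    (W : Submodule ℝ (Fin n → ℝ))
    (hWinv : ∀ x ∈ W, (A.map (Int.cast : ℤ → ℝ)).mulVecLin x ∈ W)
    (hWeq : W.map (A.map (Int.cast : ℤ → ℝ)).mulVecLin = W)
    (hWeig : ∀ z ∈ ((((A.map (Int.cast : ℤ → ℝ)).mulVecLin.restrict hWinv).charpoly).map
      (algebraMap ℝ ℂ)).roots, 1 < ‖z‖)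
    (hdense : Dense (torusProj n '' (W : Set (Fin n → ℝ))))
    (fA : Torus n → Torus n)
    (hfA : ∀ x, fA (torusProj n x) = torusProj n (realMulVec A x)) :
    ∀ U V : Set (Torus n), IsOpen U → IsOpen V → U.Nonempty → V.Nonempty →
      ∃ m : ℕ, (fA^[m] '' U ∩ V).Nonempty := by
  intro U V hU hV hUne ⟨v, hv⟩
  set L := (A.map (Int.cast : ℤ → ℝ)).mulVecLin
  have hsurj := L.restrict_surjective_of_map_eq hWinv hWeq
  let g := LinearEquiv.ofBijective _ ⟨LinearMap.injective_iff_surjective.2 hsurj, hsurj⟩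
  have hLfA : Function.Semiconj (torusProj n) L fA := fun x => (hfA x).symm
  have hgL : Function.Semiconj Subtype.val g L := fun _ => rfl
  obtain ⟨δ, hδ, hδV⟩ := Metric.isOpen_iff.mp hV v hv
  obtain ⟨_, ⟨w₀, -, rfl⟩, hw₀U⟩ := hdense.exists_mem_open hU hUne
  obtain ⟨ε, hε, hεU⟩ := Metric.isOpen_iff.mp hU _ hw₀U
  have hWdense : DenseRange fun w : W => torusProj n w := by
    rwa [DenseRange, ← Set.image_univ, ← Set.image_image, Set.image_univ, Subtype.range_coe]
  obtain ⟨T, hT⟩ := hWdense.exists_finset_forall_exists_dist_lt hδ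
  obtain ⟨m, hm⟩ := ((eventually_all_finset T).2 fun w _ =>
    (g.tendsto_symm_iterate_nhds_zero hWeig w).norm.eventually
      (gt_mem_nhds (by simpa using hε))).exists
  obtain ⟨w₁, hw₁T, hw₁⟩ := hT (v - torusProj n (L^[m] w₀))
  set x := g.symm^[m] w₁
  have hx : L^[m] x = w₁ := by
    rw [← hgL.iterate_right m]
    exact congrArg Subtype.val
      (Function.RightInverse.iterate (g.apply_symm_apply : Function.RightInverse g.symm g) m w₁)
  refine ⟨m, fA^[m] (torusProj n (w₀ + x)), ⟨_, hεU ?_, rfl⟩, hδV ?_⟩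
  · rw [Metric.mem_ball, torusProj_add, dist_self_add_left]
    exact (norm_torusProj_le n x).trans_lt (hm w₁ hw₁T)
  · rw [← hLfA.iterate_right m, ← Module.End.coe_pow, map_add, Module.End.coe_pow, hx,
      torusProj_add, Metric.mem_ball, dist_comm, add_comm, ← dist_sub_eq_dist_add_left]
    exact hw₁

/-- An automorphism of `Tⁿ` whose unstable subspace (an invariant subspace on which all
complex eigenvalues of the restriction have modulus greater than one) projects densely to the
torus is topologically transitive. -/
theorem transitive_of_dense_unstable {n : ℕ} (hn : 1 ≤ n)
    (A : Matrix (Fin n) (Fin n) ℤ) (hAdet : A.det = 1 ∨ A.det = -1)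
    (W : Submodule ℝ (Fin n → ℝ)) (hWne : W ≠ ⊥)
    (hWinv : ∀ x ∈ W, (A.map (Int.cast : ℤ → ℝ)).mulVecLin x ∈ W)
    (hWeq : W.map (A.map (Int.cast : ℤ → ℝ)).mulVecLin = W)
    (hWeig : ∀ z ∈ ((((A.map (Int.cast : ℤ → ℝ)).mulVecLin.restrict hWinv).charpoly).map
      (algebraMap ℝ ℂ)).roots, 1 < ‖z‖)
    (hdense : Dense (torusProj n '' (W : Set (Fin n → ℝ))))
    (fA : Torus n → Torus n)
    (hfA : ∀ x, fA (torusProj n x) = torusProj n (realMulVec A x)) :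
    ∀ U V : Set (Torus n), IsOpen U → IsOpen V → U.Nonempty → V.Nonempty →
      ∃ m : ℕ, (fA^[m] '' U ∩ V).Nonempty :=
  transitive_of_dense_unstable_general A W hWinv hWeq hWeig hdense fA hfA
end
end

section
/- Let a₁, …, a_m ∈ ℝⁿ. The set { Σᵢ₌₁^m tᵢaᵢ − p : t₁, …, t_m ∈ ℝ, p ∈ ℤⁿ } is dense in ℝⁿ if and only if there is no nonzero integer vector r ∈ ℤⁿ such that ⟨r, aᵢ⟩ = 0 for all i = 1, …, m. Equivalently, the projection to the torus Tⁿ = ℝⁿ/ℤⁿ of the linear span of a₁, …, a_m is dense in Tⁿ if and only if no nonzero integer vector is orthogonal to all the aᵢ. -/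
open Matrix Polynomial
open scoped Classical

noncomputable section

/-!
For `r ∈ ℤⁿ` the character `χ_r (p x) = exp (2πi ⟨r, x⟩)` of the torus is trivial on
`p (span a)` exactly when `r` is orthogonal to every `aᵢ`. A character trivial on a dense set is
trivial, and `χ_r` is not for `r ≠ 0`. Conversely, if every nontrivial character is nontrivial
on the subgroup `M = p (span a)`, then `x ↦ dist (x, M)` is `M`-invariant, so all its nonzero
Fourier coefficients vanish: it is constant, equal to its value `0` at `0`, and `M` is dense.
The set in `ℝⁿ` is the preimage of `M` under the open quotient map `p`.
-/

open MeasureTheory Metric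

lemma AddSubgroup.infDist_add_of_mem {G : Type*} [SeminormedAddCommGroup G] {M : AddSubgroup G}
    {g : G} (hg : g ∈ M) (x : G) : infDist (x + g) M = infDist x M := by
  have hM : (· + g) '' (M : Set G) = M := by
    ext y
    simp [Set.image_add_right, M.add_mem_cancel_right (M.neg_mem hg)]
  simpa only [hM] using infDist_image (isometry_add_right g) (x := x) (t := (M : Set G))

namespace UnitAddTorus

variable {d : Type*} [Fintype d]

lemma mFourier_apply_add (r : d → ℤ) (x y : UnitAddTorus d) :
    mFourier r (x + y) = mFourier r x * mFourier r y := by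
  simp only [mFourier, ContinuousMap.coe_mk, Pi.add_apply, fourier_apply, smul_add,
    AddCircle.toCircle_add, Circle.coe_mul, Finset.prod_mul_distrib]

lemma mFourierCoeff_eq_zero_of_add_right_invariant {E : Type*} [NormedAddCommGroup E]
    [NormedSpace ℂ E] {F : UnitAddTorus d → E} {r : d → ℤ} {g : UnitAddTorus d}
    (hF : ∀ x, F (x + g) = F x) (hg : mFourier r g ≠ 1) : mFourierCoeff F r = 0 := by
  have hg' : mFourier (-r) g ≠ 1 := by
    rwa [mFourier_neg, Ne, map_eq_one_iff _ (starRingEnd ℂ).injective]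
  -- `mFourierCoeff` is defined with this measure, not with the global `volume` of the torus
  let μ : Measure (UnitAddTorus d) := Measure.pi fun _ ↦ AddCircle.haarAddCircle
  change ∫ t, mFourier (-r) t • F t ∂μ = 0
  set I := ∫ t, mFourier (-r) t • F t ∂μ
  have htrans : mFourier (-r) g • I = I :=
    calc _ = ∫ t, mFourier (-r) (t + g) • F (t + g) ∂μ := by
          simp_rw [I, mFourier_apply_add, hF, mul_comm, mul_smul, integral_smul]
      _ = I := integral_add_right_eq_self (fun t ↦ mFourier (-r) t • F t) g
  have hzero : (mFourier (-r) g - 1) • I = 0 := by rw [sub_smul, one_smul, htrans, sub_self]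
  exact (smul_eq_zero.1 hzero).resolve_left (sub_ne_zero.2 hg')

lemma apply_eq_mFourierCoeff_zero {F : C(UnitAddTorus d, ℂ)}
    (hF : ∀ r ≠ 0, mFourierCoeff F r = 0) (x : UnitAddTorus d) : F x = mFourierCoeff F 0 := by
  have hsum : HasSum (fun r ↦ mFourierCoeff F r • mFourier r x) (mFourierCoeff F 0) := by
    simpa [mFourier_zero] using hasSum_single (f := fun r ↦ mFourierCoeff F r • mFourier r x) 0
      fun r hr ↦ by simp [hF r hr]
  exact (hasSum_mFourier_series_apply_of_summable (hasSum_single 0 hF).summable x).unique hsum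

theorem dense_of_forall_mFourier_ne_one (M : AddSubgroup (UnitAddTorus d))
    (hM : ∀ r ≠ 0, ∃ g ∈ M, mFourier r g ≠ 1) : Dense (M : Set (UnitAddTorus d)) := by
  let F : C(UnitAddTorus d, ℂ) := ⟨fun x ↦ (infDist x M : ℂ), by fun_prop⟩
  have hF : ∀ x, F x = F 0 := by
    have hcoeff : ∀ r ≠ 0, mFourierCoeff F r = 0 := fun r hr ↦ by
      obtain ⟨g, hgM, hg⟩ := hM r hr
      exact mFourierCoeff_eq_zero_of_add_right_invariant
        (fun x ↦ congrArg Complex.ofReal (M.infDist_add_of_mem hgM x)) hg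
    exact fun x ↦
      (apply_eq_mFourierCoeff_zero hcoeff x).trans (apply_eq_mFourierCoeff_zero hcoeff 0).symm
  intro x
  rw [mem_closure_iff_infDist_zero ⟨0, M.zero_mem⟩]
  simpa [F, infDist_zero_of_mem M.zero_mem] using hF x

end UnitAddTorus

section Resonance

open UnitAddTorus Submodule

variable {n m : ℕ}

lemma mFourier_torusProj (r : Fin n → ℤ) (x : Fin n → ℝ) :
    mFourier r (torusProj n x) =
      Complex.exp (2 * Real.pi * Complex.I * ∑ j, (r j : ℝ) * x j) := by
  simp only [mFourier, ContinuousMap.coe_mk, torusProj, fourier_coe_apply, ← Complex.exp_sum]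
  push_cast
  rw [Finset.mul_sum]
  exact congrArg _ (Finset.sum_congr rfl fun j _ ↦ by ring)

lemma exists_mFourier_torusProj_smul_ne_one {r : Fin n → ℤ} {y : Fin n → ℝ}
    (hy : ∑ j, (r j : ℝ) * y j ≠ 0) :
    ∃ t : ℝ, mFourier r (torusProj n (t • y)) ≠ 1 := by
  refine ⟨(2 * ∑ j, (r j : ℝ) * y j)⁻¹, ?_⟩
  have half : ∑ j, (r j : ℝ) * ((2 * ∑ j, (r j : ℝ) * y j)⁻¹ • y) j = 1 / 2 := by
    simp only [Pi.smul_apply, smul_eq_mul, mul_left_comm _ (_⁻¹), ← Finset.mul_sum]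
    field_simp
  rw [mFourier_torusProj, half]
  push_cast
  rw [show 2 * (Real.pi : ℂ) * Complex.I * (1 / 2) = Real.pi * Complex.I by ring,
    Complex.exp_pi_mul_I]
  norm_num

lemma torusProj_isOpenQuotientMap (n : ℕ) : IsOpenQuotientMap (torusProj n) :=
  IsOpenQuotientMap.piMap fun _ ↦ QuotientAddGroup.isOpenQuotientMap_mk

lemma torusProj_eq_torusProj_iff {x y : Fin n → ℝ} :
    torusProj n x = torusProj n y ↔ ∃ p : Fin n → ℤ, y = x - fun j ↦ (p j : ℝ) := by
  simp only [torusProj, funext_iff, ← sub_eq_zero (a := ((x _ : ℝ) : AddCircle (1 : ℝ))),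
    ← AddCircle.coe_sub, AddCircle.coe_eq_zero_iff, zsmul_one]
  simp only [Classical.skolem, Pi.sub_apply, eq_sub_iff_add_eq, add_comm]

lemma setOf_sum_smul_sub_intCast_eq_preimage (a : Fin m → Fin n → ℝ) :
    {x : Fin n → ℝ | ∃ (t : Fin m → ℝ) (p : Fin n → ℤ),
        x = (∑ i, t i • a i) - fun j ↦ (p j : ℝ)} =
      torusProj n ⁻¹' (torusProj n '' (span ℝ (Set.range a) : Set (Fin n → ℝ))) := by
  ext x
  simp only [Set.mem_preimage, Set.mem_image, SetLike.mem_coe,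
    mem_span_range_iff_exists_fun, torusProj_eq_torusProj_iff, exists_exists_eq_and]
  rfl

lemma sum_intCast_mul_eq_zero_of_mem_span {a : Fin m → Fin n → ℝ} {r : Fin n → ℤ}
    (hr : ∀ i, ∑ j, (r j : ℝ) * a i j = 0) {v : Fin n → ℝ}
    (hv : v ∈ span ℝ (Set.range a)) :
    ∑ j, (r j : ℝ) * v j = 0 := by
  induction hv using span_induction with
  | mem v hv => obtain ⟨i, rfl⟩ := hv; exact hr i
  | zero => simp
  | add v w _ _ hv hw => simp [mul_add, Finset.sum_add_distrib, hv, hw]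
  | smul c v _ hv => simp [mul_left_comm _ c, ← Finset.mul_sum, hv]

theorem dense_torusProj_span_iff (a : Fin m → Fin n → ℝ) :
    Dense (torusProj n '' (span ℝ (Set.range a) : Set (Fin n → ℝ))) ↔
      ¬∃ r : Fin n → ℤ, r ≠ 0 ∧ ∀ i, ∑ j, (r j : ℝ) * a i j = 0 := by
  constructor
  · rintro hdense ⟨r, hr0, hr⟩
    have hone : ⇑(mFourier r) = fun _ ↦ 1 := by
      refine Continuous.ext_on hdense (mFourier r).continuous continuous_const ?_
      rintro _ ⟨v, hv, rfl⟩
      simp [mFourier_torusProj, sum_intCast_mul_eq_zero_of_mem_span hr hv]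
    obtain ⟨j, hj⟩ := Function.ne_iff.1 hr0
    obtain ⟨t, ht⟩ := exists_mFourier_torusProj_smul_ne_one (r := r) (y := Pi.single j 1)
      (by simpa [Pi.single_apply] using hj)
    exact ht (congrFun hone _)
  · intro hres
    let M := (span ℝ (Set.range a)).toAddSubgroup.map
      (AddMonoidHom.compLeft (QuotientAddGroup.mk' (AddSubgroup.zmultiples (1 : ℝ))) (Fin n))
    refine dense_of_forall_mFourier_ne_one (d := Fin n) M fun r hr ↦ ?_
    obtain ⟨i, hi⟩ : ∃ i, ∑ j, (r j : ℝ) * a i j ≠ 0 := by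
      by_contra! h
      exact hres ⟨r, hr, h⟩
    obtain ⟨t, ht⟩ := exists_mFourier_torusProj_smul_ne_one hi
    exact ⟨_, ⟨t • a i, smul_mem _ t (subset_span ⟨i, rfl⟩), rfl⟩, ht⟩

end Resonance

/-- The set of vectors `∑ tᵢ aᵢ - p` (with real `tᵢ` and integer `p`) is dense in `ℝⁿ` iff
no nonzero integer vector is orthogonal to all the `aᵢ`; equivalently, the projection to the
torus of the linear span of the `aᵢ` is dense iff the same condition holds. -/
theorem dense_iff_no_resonance {n m : ℕ} (a : Fin m → (Fin n → ℝ)) :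
    (Dense {x : Fin n → ℝ | ∃ (t : Fin m → ℝ) (p : Fin n → ℤ),
        x = (∑ i, t i • a i) - fun j => (p j : ℝ)} ↔
      ¬∃ r : Fin n → ℤ, r ≠ 0 ∧ ∀ i, ∑ j, (r j : ℝ) * a i j = 0) ∧
    (Dense (torusProj n '' ((Submodule.span ℝ (Set.range a) : Submodule ℝ (Fin n → ℝ)) :
        Set (Fin n → ℝ))) ↔
      ¬∃ r : Fin n → ℤ, r ≠ 0 ∧ ∀ i, ∑ j, (r j : ℝ) * a i j = 0) := by
  rw [setOf_sum_smul_sub_intCast_eq_preimage, (torusProj_isOpenQuotientMap n).dense_preimage_iff]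
  exact ⟨dense_torusProj_span_iff a, dense_torusProj_span_iff a⟩
end
end

section
/- Let A be an n×n integer matrix with determinant ±1. Then no complex eigenvalue of A is a root of unity if and only if for every nonzero integer vector v ∈ ℤⁿ the orbit { (Aᵀ)^k v : k ∈ ℕ } of the dual map Aᵀ : ℤⁿ → ℤⁿ is infinite. -/
open Matrix Polynomial
open scoped Classical

noncomputable section

/-! Since `det A = ±1`, the dual map `Aᵀ` is injective on `ℤⁿ`, so the orbit of `v` is finite
exactly when `v` is periodic: `(Aᵀ)^m v = v` for some `m > 0`. A nonzero such `v` exists iff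
`det (A^m - 1) = 0`, i.e. iff `1` is an eigenvalue of `A^m`, and by spectral mapping over `ℂ`
the eigenvalues of `A^m` are the `m`-th powers of those of `A`. -/

open Function Set

theorem Function.Injective.finite_range_iterate_iff {α : Type*} {f : α → α} (hf : Injective f)
    (x : α) : (range fun k => f^[k] x).Finite ↔ x ∈ periodicPts f := by
  constructor
  · intro hfin
    obtain ⟨m, n, hmn, heq⟩ :=
      hfin.exists_lt_map_eq_of_forall_mem (f := fun k => f^[k] x) (fun k => mem_range_self k)
    exact mk_mem_periodicPts (by omega) (iterate_cancel hf heq.symm)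
  · intro hx
    refine ((finite_Iio (minimalPeriod f x)).image fun k => f^[k] x).subset ?_
    rintro _ ⟨k, rfl⟩
    exact ⟨k % minimalPeriod f x, Nat.mod_lt _ (minimalPeriod_pos_of_mem_periodicPts hx),
      iterate_mod_minimalPeriod_eq⟩

namespace Matrix

variable {ι R : Type*} [Fintype ι] [DecidableEq ι]

theorem pow_mulVec_eq_iterate [CommSemiring R] (M : Matrix ι ι R) (k : ℕ) (v : ι → R) :
    (M ^ k) *ᵥ v = (M *ᵥ ·)^[k] v := by
  induction k with
  | zero => simp
  | succ k ih => rw [pow_succ', ← mulVec_mulVec, ih, iterate_succ_apply']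

theorem exists_mulVec_eq_self_iff [CommRing R] [IsDomain R] (M : Matrix ι ι R) :
    (∃ v ≠ 0, M *ᵥ v = v) ↔ (M - 1).det = 0 := by
  simp only [← exists_mulVec_eq_zero_iff, sub_mulVec, one_mulVec, sub_eq_zero]

theorem one_mem_spectrum_iff {K : Type*} [Field K] (M : Matrix ι ι K) :
    (1 : K) ∈ spectrum K M ↔ (M - 1).det = 0 := by
  rw [spectrum.mem_iff, map_one, ← neg_sub, IsUnit.neg_iff, isUnit_iff_isUnit_det,
    isUnit_iff_ne_zero, not_not]

end Matrix

theorem mem_eigsC_iff {n : ℕ} (A : Matrix (Fin n) (Fin n) ℤ) (z : ℂ) :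
    z ∈ eigsC A ↔ z ∈ spectrum ℂ (A.map (Int.cast : ℤ → ℂ)) := by
  rw [eigsC, mem_roots (charpoly_monic _).ne_zero, mem_spectrum_iff_isRoot_charpoly]

theorem exists_mem_eigsC_pow_eq_one_iff {n : ℕ} (A : Matrix (Fin n) (Fin n) ℤ) {m : ℕ}
    (hm : 0 < m) : (∃ z ∈ eigsC A, z ^ m = 1) ↔ ∃ v ≠ 0, (Aᵀ ^ m) *ᵥ v = v := by
  have hcast :
      (A.map (Int.cast : ℤ → ℂ)) ^ m - 1 = (Int.castRingHom ℂ).mapMatrix (A ^ m - 1) := by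
    rw [map_sub, map_pow, map_one]; rfl
  calc (∃ z ∈ eigsC A, z ^ m = 1)
      ↔ 1 ∈ spectrum ℂ ((A.map (Int.cast : ℤ → ℂ)) ^ m) := by
        simp [spectrum.map_pow_of_pos _ hm, mem_eigsC_iff]
    _ ↔ (A ^ m - 1).det = 0 := by
        rw [one_mem_spectrum_iff, hcast, ← RingHom.map_det, eq_intCast, Int.cast_eq_zero]
    _ ↔ ∃ v ≠ 0, (Aᵀ ^ m) *ᵥ v = v := by
        rw [exists_mulVec_eq_self_iff, ← det_transpose, transpose_sub, transpose_pow, transpose_one]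

/-- No complex eigenvalue of `A` is a root of unity iff every nonzero orbit of the dual map
`Aᵀ : ℤⁿ → ℤⁿ` is infinite. -/
theorem no_root_of_unity_iff_infinite_dual_orbits {n : ℕ}
    (A : Matrix (Fin n) (Fin n) ℤ) (hAdet : A.det = 1 ∨ A.det = -1) :
    (∀ z ∈ eigsC A, ¬ IsRootOfUnity z) ↔
      ∀ v : Fin n → ℤ, v ≠ 0 → (Set.range fun k : ℕ => (Aᵀ ^ k).mulVec v).Infinite := by
  have hinj : Injective (Aᵀ *ᵥ ·) := mulVec_injective_of_det_ne_zero <| by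
    rw [det_transpose]; rcases hAdet with h | h <;> simp [h]
  have hper : ∀ m, 0 < m → ((∃ z ∈ eigsC A, z ^ m = 1) ↔ ∃ v ≠ 0, IsPeriodicPt (Aᵀ *ᵥ ·) m v) :=
    fun m hm => by
      simp only [exists_mem_eigsC_pow_eq_one_iff A hm, pow_mulVec_eq_iterate, IsPeriodicPt,
        IsFixedPt]
  simp only [pow_mulVec_eq_iterate, ← Set.not_finite, hinj.finite_range_iterate_iff,
    mem_periodicPts]
  constructor
  · rintro hno v hv ⟨m, hm, hvm⟩
    obtain ⟨z, hz, hzm⟩ := (hper m hm).2 ⟨v, hv, hvm⟩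
    exact hno z hz ⟨m, hm, hzm⟩
  · rintro hinf z hz ⟨m, hm, hzm⟩
    obtain ⟨v, hv, hvm⟩ := (hper m hm).1 ⟨z, hz, hzm⟩
    exact hinf v hv ⟨m, hm, hvm⟩
end
end

section
/- The polynomial x⁶ + 2x⁴ − x³ + 2x² + 1 ∈ ℤ[x] is irreducible over ℚ, has no real roots, and has exactly two complex roots of absolute value 1 (a complex-conjugate pair), the remaining four roots having absolute value different from 1. -/
open Matrix Polynomial
open scoped Classical

noncomputable section

/-- The sextic `x⁶ + 2x⁴ − x³ + 2x² + 1`. -/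
def Q14 : Polynomial ℤ := X ^ 6 + 2 * X ^ 4 - X ^ 3 + 2 * X ^ 2 + 1

/-!
Modulo 2 the polynomial is the cyclotomic polynomial `Φ₉ = x⁶ + x³ + 1`, which stays irreducible
over `𝔽₂` because `2` has order `6 = φ(9)` modulo `9`; hence `Q14` is irreducible over `ℚ`, and in
particular separable.

`Q14` is palindromic: `Q14(x) = x³ R(x + x⁻¹)` with `R(y) = y³ - y - 1`. On the unit circle
`x + x⁻¹ = 2 Re x` is real, so the roots of modulus one are the points with `2 Re x = ρ`, where
`ρ ∈ (1, 2)` is the unique real root of `R`; there are exactly two of them, complex conjugate.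
-/

theorem cyclotomic_nine {R : Type*} [CommRing R] : cyclotomic 9 R = X ^ 6 + X ^ 3 + 1 := by
  rw [show 9 = 3 ^ (1 + 1) by norm_num, cyclotomic_prime_pow_eq_geom_sum Nat.prime_three]
  simp only [pow_one, Finset.sum_range_succ, Finset.range_one, Finset.sum_singleton, pow_zero]
  ring

theorem orderOf_unitOfCoprime_two_nine :
    orderOf (ZMod.unitOfCoprime 2 (by norm_num : Nat.Coprime 2 9)) = 6 := by
  rw [orderOf_eq_iff (by norm_num)]
  refine ⟨by decide, fun m hm hm0 => ?_⟩
  interval_cases m <;> decide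

theorem irreducible_cyclotomic_nine_zmod_two : Irreducible (cyclotomic 9 (ZMod 2)) := by
  refine ZMod.irreducible_of_dvd_cyclotomic_of_natDegree (by norm_num) dvd_rfl ?_
  rw [natDegree_cyclotomic, orderOf_unitOfCoprime_two_nine]
  exact Nat.totient_prime_pow_succ Nat.prime_three 1

theorem Q14_eq_cyclotomic_nine_add : Q14 = cyclotomic 9 ℤ + 2 * (X ^ 4 - X ^ 3 + X ^ 2) := by
  rw [cyclotomic_nine, Q14]
  ring

theorem Q14_monic : Q14.Monic := by
  unfold Q14
  monicity!

theorem map_Q14_zmod_two : Q14.map (Int.castRingHom (ZMod 2)) = cyclotomic 9 (ZMod 2) := by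
  simp [Q14_eq_cyclotomic_nine_add, CharTwo.two_eq_zero]

theorem irreducible_map_Q14_rat : Irreducible (Q14.map (Int.castRingHom ℚ)) := by
  refine (IsPrimitive.Int.irreducible_iff_irreducible_map_cast Q14_monic.isPrimitive).mp ?_
  refine Q14_monic.irreducible_of_irreducible_map (Int.castRingHom (ZMod 2)) Q14 ?_
  rw [map_Q14_zmod_two]
  exact irreducible_cyclotomic_nine_zmod_two

theorem nodup_roots_map_Q14_complex : (Q14.map (Int.castRingHom ℂ)).roots.Nodup := by
  have hsep := irreducible_map_Q14_rat.separable.map (f := algebraMap ℚ ℂ)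
  rw [Polynomial.map_map, RingHom.ext_int ((algebraMap ℚ ℂ).comp _) (Int.castRingHom ℂ)] at hsep
  exact nodup_roots hsep

theorem card_roots_map_Q14_complex : (Q14.map (Int.castRingHom ℂ)).roots.card = 6 := by
  rw [IsAlgClosed.card_roots_map_eq_natDegree_of_injective _ (RingHom.injective_int _)]
  unfold Q14
  compute_degree!

theorem eval_map_Q14 {R : Type*} [CommRing R] (x : R) :
    (Q14.map (Int.castRingHom R)).eval x = x ^ 6 + 2 * x ^ 4 - x ^ 3 + 2 * x ^ 2 + 1 := by
  simp [Q14]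

theorem eval_map_Q14_real_ne_zero (x : ℝ) : (Q14.map (Int.castRingHom ℝ)).eval x ≠ 0 := by
  rw [eval_map_Q14]
  nlinarith [sq_nonneg (x ^ 3 - 1), sq_nonneg x, sq_nonneg (x ^ 2)]

theorem one_lt_of_pow_three_eq_add_one {y : ℝ} (hy : y ^ 3 = y + 1) : 1 < y := by
  by_contra! h
  nlinarith [mul_nonneg (sub_nonneg.2 h) (sq_nonneg (y + 1 / 2)), sq_nonneg (y + 1), sq_nonneg y]

theorem lt_two_of_pow_three_eq_add_one {y : ℝ} (hy : y ^ 3 = y + 1) : y < 2 := by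
  by_contra! h
  nlinarith [mul_le_mul h h (by norm_num) (by linarith)]

theorem eq_of_pow_three_eq_add_one {x y : ℝ} (hx : x ^ 3 = x + 1) (hy : y ^ 3 = y + 1) :
    x = y := by
  have hx1 := one_lt_of_pow_three_eq_add_one hx
  have hy1 := one_lt_of_pow_three_eq_add_one hy
  have hfactor : (x - y) * (x ^ 2 + x * y + y ^ 2 - 1) = 0 := by linear_combination hx - hy
  rcases mul_eq_zero.mp hfactor with h | h
  · linarith
  · nlinarith

theorem exists_pow_three_eq_add_one : ∃ ρ : ℝ, ρ ^ 3 = ρ + 1 := by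
  obtain ⟨ρ, -, hρ⟩ := intermediate_value_Icc (by norm_num : (1 : ℝ) ≤ 2)
    (f := fun y : ℝ => y ^ 3 - y - 1) (by fun_prop)
    (show (0 : ℝ) ∈ Set.Icc ((1 : ℝ) ^ 3 - 1 - 1) (2 ^ 3 - 2 - 1) by norm_num)
  exact ⟨ρ, by linear_combination hρ⟩

theorem sextic_eq_quadratic_mul_add_cubic {R : Type*} [CommRing R] (x y : R) :
    x ^ 6 + 2 * x ^ 4 - x ^ 3 + 2 * x ^ 2 + 1 =
      (x ^ 2 - y * x + 1) * (x ^ 4 + y * x ^ 3 + (y ^ 2 + 1) * x ^ 2 + y * x + 1) +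
        x ^ 3 * (y ^ 3 - y - 1) := by
  ring

theorem Complex.sq_sub_two_re_mul_add_normSq (z : ℂ) :
    z ^ 2 - 2 * z.re * z + Complex.normSq z = 0 := by
  have hadd := Complex.add_conj z
  push_cast at hadd
  rw [← Complex.mul_conj]
  linear_combination z * hadd

theorem Complex.norm_eq_one_and_re_eq_iff {c : ℝ} (hc : c ^ 2 ≤ 1) (z : ℂ) :
    ‖z‖ = 1 ∧ z.re = c ↔ z = ⟨c, √(1 - c ^ 2)⟩ ∨ z = (starRingEnd ℂ) ⟨c, √(1 - c ^ 2)⟩ := by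
  have hs := Real.sq_sqrt (sub_nonneg.2 hc)
  rw [← pow_eq_one_iff_of_nonneg (norm_nonneg z) two_ne_zero, Complex.sq_norm,
    Complex.normSq_apply]
  constructor
  · rintro ⟨hnorm, rfl⟩
    have : (z.im - √(1 - z.re ^ 2)) * (z.im + √(1 - z.re ^ 2)) = 0 := by
      linear_combination hnorm - hs
    rcases mul_eq_zero.mp this with h | h
    · exact Or.inl (Complex.ext rfl (sub_eq_zero.1 h))
    · exact Or.inr (Complex.ext rfl (by rw [Complex.conj_im]; linarith))
  · rintro (rfl | rfl)
    · exact ⟨by linear_combination hs, rfl⟩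
    · exact ⟨by simp only [Complex.conj_re, Complex.conj_im]; linear_combination hs, rfl⟩

theorem isRoot_map_Q14_iff_of_norm_eq_one {z : ℂ} (hz : ‖z‖ = 1) :
    (Q14.map (Int.castRingHom ℂ)).IsRoot z ↔ (2 * z.re) ^ 3 = 2 * z.re + 1 := by
  have hz0 : z ≠ 0 := norm_ne_zero_iff.mp (by rw [hz]; exact one_ne_zero)
  have hquad : z ^ 2 - (2 * z.re : ℝ) * z + 1 = 0 := by
    have := Complex.sq_sub_two_re_mul_add_normSq z
    rw [Complex.normSq_eq_norm_sq, hz] at this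
    push_cast at this ⊢
    linear_combination this
  rw [IsRoot, eval_map_Q14, sextic_eq_quadratic_mul_add_cubic z (2 * z.re : ℝ), hquad, zero_mul,
    zero_add, mul_eq_zero, or_iff_right (pow_ne_zero 3 hz0)]
  norm_cast
  rw [sub_sub, sub_eq_zero]

theorem exists_filter_roots_map_Q14_norm_eq_one_eq_pair :
    ∃ w : ℂ, 0 < w.im ∧
      (Q14.map (Int.castRingHom ℂ)).roots.filter (fun z => ‖z‖ = 1) = {w, (starRingEnd ℂ) w} := by
  obtain ⟨ρ, hρ⟩ := exists_pow_three_eq_add_one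
  have hc : (ρ / 2) ^ 2 < 1 := by
    nlinarith [one_lt_of_pow_three_eq_add_one hρ, lt_two_of_pow_three_eq_add_one hρ]
  have him : 0 < √(1 - (ρ / 2) ^ 2) := Real.sqrt_pos.2 (sub_pos.2 hc)
  refine ⟨⟨ρ / 2, √(1 - (ρ / 2) ^ 2)⟩, him, ?_⟩
  have hne : (⟨ρ / 2, √(1 - (ρ / 2) ^ 2)⟩ : ℂ) ≠ (starRingEnd ℂ) ⟨ρ / 2, √(1 - (ρ / 2) ^ 2)⟩ := by
    intro h
    have := congrArg Complex.im h
    simp only [Complex.conj_im] at this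
    linarith
  refine (Multiset.Nodup.ext (nodup_roots_map_Q14_complex.filter _) (by simp [hne])).2 fun z => ?_
  rw [Multiset.mem_filter, mem_roots (Q14_monic.map _).ne_zero, Multiset.insert_eq_cons,
    Multiset.mem_cons, Multiset.mem_singleton, ← Complex.norm_eq_one_and_re_eq_iff hc.le]
  constructor
  · rintro ⟨hroot, hnorm⟩
    have := eq_of_pow_three_eq_add_one ((isRoot_map_Q14_iff_of_norm_eq_one hnorm).1 hroot) hρ
    exact ⟨hnorm, by linarith⟩
  · rintro ⟨hnorm, hre⟩
    refine ⟨(isRoot_map_Q14_iff_of_norm_eq_one hnorm).2 ?_, hnorm⟩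
    rw [hre, mul_div_cancel₀ ρ two_ne_zero, hρ]

/-- `Q14` is irreducible over `ℚ`, has no real roots, has exactly two complex roots of
absolute value one (a complex-conjugate pair), and its remaining four roots have absolute
value different from one. -/
theorem Q14_irreducible_roots :
    Irreducible (Q14.map (Int.castRingHom ℚ)) ∧
    (∀ x : ℝ, Polynomial.eval x (Q14.map (Int.castRingHom ℝ)) ≠ 0) ∧
    (((Q14.map (Int.castRingHom ℂ)).roots.filter fun z => ‖z‖ = 1).card = 2) ∧
    (∃ z ∈ (Q14.map (Int.castRingHom ℂ)).roots, ‖z‖ = 1 ∧ z.im ≠ 0 ∧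
      (starRingEnd ℂ) z ∈ (Q14.map (Int.castRingHom ℂ)).roots) ∧
    (((Q14.map (Int.castRingHom ℂ)).roots.filter fun z => ‖z‖ ≠ 1).card = 4) := by
  obtain ⟨w, hw, hfilter⟩ := exists_filter_roots_map_Q14_norm_eq_one_eq_pair
  have hcircle : ∀ z ∈ ({w, (starRingEnd ℂ) w} : Multiset ℂ),
      z ∈ (Q14.map (Int.castRingHom ℂ)).roots ∧ ‖z‖ = 1 := fun z hz =>
    Multiset.mem_filter.1 (hfilter ▸ hz)
  have hcard : ((Q14.map (Int.castRingHom ℂ)).roots.filter fun z => ‖z‖ = 1).card = 2 := by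
    rw [hfilter, Multiset.card_pair]
  refine ⟨irreducible_map_Q14_rat, eval_map_Q14_real_ne_zero, hcard,
    ⟨w, (hcircle w (by simp)).1, (hcircle w (by simp)).2, hw.ne', (hcircle _ (by simp)).1⟩, ?_⟩
  have hsplit := congrArg Multiset.card
    (Multiset.filter_add_not (fun z => ‖z‖ = 1) (Q14.map (Int.castRingHom ℂ)).roots)
  rw [Multiset.card_add, hcard, card_roots_map_Q14_complex] at hsplit
  exact Nat.add_left_cancel hsplit
end
end

section
/- Let Q ∈ ℤ[x] be a monic polynomial of degree 6 that is irreducible over ℚ, and let λ₁ ≠ λ₂ be two real roots of Q. Set f₁ = (1, λ₁, λ₁², λ₁³, λ₁⁴, λ₁⁵) and f₂ = (1, λ₂, λ₂², λ₂³, λ₂⁴, λ₂⁵) in ℝ⁶. Then there is no nonzero integer vector r ∈ ℤ⁶ with ⟨r, f₁⟩ = 0 and ⟨r, f₂⟩ = 0, and consequently the set { t₁f₁ + t₂f₂ − p : t₁, t₂ ∈ ℝ, p ∈ ℤ⁶ } is dense in ℝ⁶ (equivalently, the projection of the plane spanned by f₁, f₂ is dense in the torus T⁶ = ℝ⁶/ℤ⁶).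 -/
open Matrix Polynomial
open scoped Classical

noncomputable section

/-!
An integer relation `∑ rⱼ λ^j = 0` with `r ≠ 0` would make `λ` a root of a nonzero rational
polynomial of degree `< 6`, impossible for a root of the irreducible sextic `Q`; so already the
powers of `λ₁` are linearly independent over `ℤ`.

Density is Kronecker's theorem for the plane `V` spanned by `f₁, f₂`. The closure `H` of
`V + ℤⁿ` is a closed subgroup of `ℝⁿ`; it splits as its largest linear subspace plus a discrete
subgroup of a complement, which is a lattice there. So if `H ≠ ℝⁿ`, some nonzero linear
functional takes integer values on `H`. On `ℤⁿ` this makes it an integer vector `r`, and on the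
lines through `V ⊆ H` it must vanish: `r` is an integer relation satisfied by every vector of `V`.
-/

open Filter Topology

theorem linearIndependent_int_pow_of_irreducible {K : Type*} [Field K] [CharZero K] {Q : ℤ[X]}
    (hirr : Irreducible (Q.map (Int.castRingHom ℚ))) {x : K}
    (hx : (Q.map (Int.castRingHom K)).IsRoot x) :
    LinearIndependent ℤ fun i : Fin Q.natDegree => x ^ (i : ℕ) := by
  have hroot : aeval x (Q.map (Int.castRingHom ℚ)) = 0 := by
    rwa [aeval_def, eval₂_eq_eval_map, Polynomial.map_map,
      RingHom.ext_int ((algebraMap ℚ K).comp _) (Int.castRingHom K)]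
  have hdeg : (minpoly ℚ x).natDegree = Q.natDegree := by
    rw [← minpoly.eq_of_irreducible hirr hroot,
      natDegree_mul_C (inv_ne_zero (leadingCoeff_ne_zero.2 hirr.ne_zero)),
      natDegree_map_eq_of_injective (RingHom.injective_int _)]
  have hli := linearIndependent_pow (K := ℚ) x
  rw [hdeg] at hli
  exact hli.restrict_scalars' ℤ

theorem IsZLattice.exists_linearMap_ne_zero_intValued {F : Type*} [NormedAddCommGroup F]
    [NormedSpace ℝ F] [FiniteDimensional ℝ F] [Nontrivial F] (L : Submodule ℤ F)
    [DiscreteTopology L] [IsZLattice ℝ L] :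
    ∃ φ : F →ₗ[ℝ] ℝ, φ ≠ 0 ∧ ∀ x ∈ L, ∃ z : ℤ, φ x = z := by
  let b := Module.Free.chooseBasis ℤ L
  have : Nonempty (Module.Free.ChooseBasisIndex ℤ L) := by
    rw [← Fintype.card_pos_iff, ← Module.finrank_eq_card_chooseBasisIndex, ZLattice.rank ℝ L]
    exact Module.finrank_pos
  obtain ⟨i⟩ := this
  refine ⟨(b.ofZLatticeBasis ℝ L).coord i, fun h => ?_, fun x hx => ⟨b.repr ⟨x, hx⟩ i, ?_⟩⟩
  · simpa using LinearMap.congr_fun h (b.ofZLatticeBasis ℝ L i)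
  · simpa using (b.ofZLatticeBasis_repr_apply ℝ L ⟨x, hx⟩ i)

namespace AddSubgroup

variable {E : Type*} [NormedAddCommGroup E] [NormedSpace ℝ E]

def linealSpace (H : AddSubgroup E) : Submodule ℝ E where
  carrier := {x | ∀ t : ℝ, t • x ∈ H}
  add_mem' hx hy t := by simpa only [smul_add] using H.add_mem (hx t) (hy t)
  zero_mem' t := by simpa only [smul_zero] using H.zero_mem
  smul_mem' c x hx t := by simpa only [smul_smul] using hx (t * c)

theorem mem_of_mem_linealSpace {H : AddSubgroup E} {x : E} (hx : x ∈ H.linealSpace) : x ∈ H := by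
  simpa only [one_smul] using hx 1

theorem mem_linealSpace_of_tendsto {H : AddSubgroup E} (hH : IsClosed (H : Set E))
    {v : ℕ → E} {u : E} (hvH : ∀ k, v k ∈ H) (hv0 : ∀ k, v k ≠ 0)
    (hv : Tendsto (fun k => ‖v k‖) atTop (𝓝 0))
    (hu : Tendsto (fun k => ‖v k‖⁻¹ • v k) atTop (𝓝 u)) :
    u ∈ H.linealSpace := by
  intro t
  -- `t • u` is the limit of the multiples `⌊t / ‖v k‖⌋ • v k ∈ H`
  have hpos : ∀ k, 0 < ‖v k‖ := fun k => norm_pos_iff.2 (hv0 k)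
  have hc : Tendsto (fun k => ⌊t / ‖v k‖⌋ * ‖v k‖) atTop (𝓝 t) := by
    refine tendsto_iff_dist_tendsto_zero.2 (squeeze_zero (fun _ => dist_nonneg) (fun k => ?_) hv)
    have h₁ := Int.floor_le (t / ‖v k‖)
    have h₂ := Int.lt_floor_add_one (t / ‖v k‖)
    rw [le_div_iff₀ (hpos k)] at h₁
    rw [div_lt_iff₀ (hpos k)] at h₂
    rw [Real.dist_eq, abs_le]
    constructor <;> nlinarith
  refine hH.mem_of_tendsto (hc.smul hu) (Eventually.of_forall fun k => ?_)
  rw [smul_smul, mul_assoc, mul_inv_cancel₀ (hpos k).ne', mul_one, Int.cast_smul_eq_zsmul]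
  exact H.zsmul_mem (hvH k) _

theorem exists_pos_forall_mem_norm_lt [FiniteDimensional ℝ E] {H : AddSubgroup E}
    (hH : IsClosed (H : Set E)) {W : Submodule ℝ E} (hW : Disjoint W H.linealSpace) :
    ∃ ε > 0, ∀ x ∈ H, x ∈ W → ‖x‖ < ε → x = 0 := by
  by_contra! hsmall
  choose v hvH hvW hvlt hv0 using fun k : ℕ => hsmall (1 / (k + 1)) Nat.one_div_pos_of_nat
  have hu : ∀ k, ‖v k‖⁻¹ • v k ∈ Metric.sphere (0 : E) 1 ∩ W := fun k =>
    ⟨by simp [norm_smul, hv0 k], W.smul_mem _ (hvW k)⟩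
  obtain ⟨u, ⟨hu1, huW⟩, σ, hσ, hlim⟩ :=
    ((isCompact_sphere 0 1).inter_right (Submodule.closed_of_finiteDimensional W)).tendsto_subseq hu
  have hv : Tendsto (fun k => ‖v (σ k)‖) atTop (𝓝 0) :=
    squeeze_zero (fun _ => norm_nonneg _) (fun k => (hvlt (σ k)).le)
      (tendsto_one_div_add_atTop_nhds_zero_nat.comp hσ.tendsto_atTop)
  have hul : u ∈ H.linealSpace :=
    mem_linealSpace_of_tendsto hH (fun k => hvH (σ k)) (fun k => hv0 (σ k)) hv hlim
  have : u = 0 := Submodule.disjoint_def.1 hW u huW hul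
  simp [this] at hu1

theorem exists_linearMap_ne_zero_intValued [FiniteDimensional ℝ E] {H : AddSubgroup E}
    (hH : IsClosed (H : Set E)) (hspan : Submodule.span ℝ (H : Set E) = ⊤) (hne : H ≠ ⊤) :
    ∃ φ : E →ₗ[ℝ] ℝ, φ ≠ 0 ∧ ∀ x ∈ H, ∃ z : ℤ, φ x = z := by
  obtain ⟨W, hW⟩ := Submodule.exists_isCompl H.linealSpace
  set π := W.projectionOnto H.linealSpace hW.symm
  -- `H = H.linealSpace ⊕ (H ∩ W)`, and `L = H ∩ W` is a lattice in `W`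
  let L : Submodule ℤ W := H.toIntSubmodule.comap (W.subtype.restrictScalars ℤ)
  have hπH : ∀ x ∈ H, π x ∈ L := fun x hx => by
    have := H.sub_mem hx (mem_of_mem_linealSpace (W.sub_projection_mem hW.symm x))
    change (π x : E) ∈ H
    simpa [π] using this
  obtain ⟨ε, hε, hsmall⟩ := exists_pos_forall_mem_norm_lt hH hW.symm.disjoint
  have : DiscreteTopology L := .of_forall_le_dist hε fun x y hxy => by
    by_contra! hlt
    refine hxy (Subtype.ext (Subtype.ext (sub_eq_zero.1 (hsmall _ ?_ (W.sub_mem x.1.2 y.1.2) ?_))))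
    · exact H.sub_mem x.2 y.2
    · simpa [dist_eq_norm] using hlt
  have : IsZLattice ℝ L := by
    refine ⟨eq_top_iff.2 ?_⟩
    rw [← (W.range_projectionOnto hW.symm), LinearMap.range_eq_map, ← hspan, Submodule.map_span]
    exact Submodule.span_mono (Set.image_subset_iff.2 hπH)
  have : Nontrivial W := by
    refine Submodule.nontrivial_iff_ne_bot.2 fun hbot => hne (eq_top_iff.2 fun x _ => ?_)
    rw [hbot] at hW
    exact mem_of_mem_linealSpace ((eq_top_of_isCompl_bot hW).symm ▸ Submodule.mem_top)
  obtain ⟨ψ, hψ, hψL⟩ := IsZLattice.exists_linearMap_ne_zero_intValued L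
  refine ⟨ψ ∘ₗ π, fun h => hψ ?_, fun x hx => hψL _ (hπH x hx)⟩
  exact (LinearMap.cancel_right (W.projectionOnto_surjective hW.symm)).1 (by simpa using h)

end AddSubgroup

def intLattice (ι : Type*) : AddSubgroup (ι → ℝ) :=
  (AddMonoidHom.compLeft (Int.castAddHom ℝ) ι).range

theorem eq_zero_of_forall_mul_intValued {a : ℝ} (h : ∀ t : ℝ, ∃ z : ℤ, t * a = z) : a = 0 := by
  by_contra ha
  obtain ⟨z, hz⟩ := h (2 * a)⁻¹
  have h2 : (2 : ℝ) * z = 1 := by rw [← hz]; field_simp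
  have : (2 : ℤ) * z = 1 := by exact_mod_cast h2
  omega

theorem dense_sup_intLattice {ι : Type*} [Fintype ι] (V : Submodule ℝ (ι → ℝ))
    (hV : ∀ r : ι → ℤ, (∀ v ∈ V, ∑ i, (r i : ℝ) * v i = 0) → r = 0) :
    Dense ((V.toAddSubgroup ⊔ intLattice ι : AddSubgroup (ι → ℝ)) : Set (ι → ℝ)) := by
  set H := (V.toAddSubgroup ⊔ intLattice ι).topologicalClosure
  by_contra hnd
  have hne : H ≠ ⊤ := fun h => hnd (by
    rw [dense_iff_closure_eq, ← AddSubgroup.topologicalClosure_coe]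
    exact congr_arg SetLike.coe h)
  have hbasis : ∀ i, Pi.basisFun ℝ ι i ∈ H := fun i =>
    AddSubgroup.le_topologicalClosure _ (AddSubgroup.mem_sup_right ⟨Pi.single i 1, by
      ext j; simp [Pi.single_apply]⟩)
  have hspan : Submodule.span ℝ (H : Set (ι → ℝ)) = ⊤ :=
    eq_top_iff.2 ((Pi.basisFun ℝ ι).span_eq.ge.trans
      (Submodule.span_mono (Set.range_subset_iff.2 hbasis)))
  obtain ⟨φ, hφ, hφH⟩ := AddSubgroup.exists_linearMap_ne_zero_intValued
    (AddSubgroup.isClosed_topologicalClosure _) hspan hne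
  choose r hr using fun i => hφH _ (hbasis i)
  have hφr : ∀ x, φ x = ∑ i, (r i : ℝ) * x i := fun x => by
    rw [φ.pi_apply_eq_sum_univ x]
    refine Finset.sum_congr rfl fun i _ => ?_
    have : (fun j => if i = j then (1 : ℝ) else 0) = Pi.basisFun ℝ ι i := by
      ext j; simp [Pi.single_apply, eq_comm]
    rw [this, hr i, smul_eq_mul, mul_comm]
  refine hφ (LinearMap.ext fun x => ?_)
  rw [hφr, hV r fun v hv => ?_]
  · simp
  rw [← hφr]
  refine eq_zero_of_forall_mul_intValued fun t => ?_
  rw [← smul_eq_mul, ← map_smul]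
  exact hφH _ (AddSubgroup.le_topologicalClosure _
    (AddSubgroup.mem_sup_left (V.smul_mem t hv)))

theorem torusProj_add_intCast {n : ℕ} (x : Fin n → ℝ) (p : Fin n → ℤ) :
    torusProj n (x + fun i => (p i : ℝ)) = torusProj n x := by
  funext i
  simp [torusProj]

theorem continuous_torusProj (n : ℕ) : Continuous (torusProj n) :=
  continuous_pi fun i => continuous_quotient_mk'.comp (continuous_apply i)

theorem surjective_torusProj (n : ℕ) : Function.Surjective (torusProj n) :=
  fun y => ⟨fun i => (y i).out, funext fun i => QuotientAddGroup.out_eq' (y i)⟩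

theorem dense_torusProj_image {n : ℕ} (V : Submodule ℝ (Fin n → ℝ))
    (hV : Dense ((V.toAddSubgroup ⊔ intLattice (Fin n) : AddSubgroup (Fin n → ℝ)) :
      Set (Fin n → ℝ))) :
    Dense (torusProj n '' V) := by
  refine ((surjective_torusProj n).denseRange.dense_image (continuous_torusProj n) hV).mono ?_
  rintro _ ⟨x, hx, rfl⟩
  obtain ⟨v, hv, _, ⟨p, rfl⟩, rfl⟩ := AddSubgroup.mem_sup.1 hx
  exact ⟨v, hv, (torusProj_add_intCast v p).symm⟩

theorem no_resonance_real_roots_general (Q : Polynomial ℤ) (hdeg : Q.natDegree = 6)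
    (hirr : Irreducible (Q.map (Int.castRingHom ℚ)))
    (l₁ l₂ : ℝ)
    (h₁ : (Q.map (Int.castRingHom ℝ)).IsRoot l₁) :
    (¬∃ r : Fin 6 → ℤ, r ≠ 0 ∧ (∑ j, (r j : ℝ) * l₁ ^ (j : ℕ)) = 0 ∧
        (∑ j, (r j : ℝ) * l₂ ^ (j : ℕ)) = 0) ∧
    Dense {x : Fin 6 → ℝ | ∃ (t₁ t₂ : ℝ) (p : Fin 6 → ℤ),
        x = (t₁ • fun j : Fin 6 => l₁ ^ (j : ℕ)) + (t₂ • fun j : Fin 6 => l₂ ^ (j : ℕ))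
          - fun j => (p j : ℝ)} ∧
    Dense (torusProj 6 ''
      ((Submodule.span ℝ {(fun j : Fin 6 => l₁ ^ (j : ℕ)), (fun j : Fin 6 => l₂ ^ (j : ℕ))} :
        Submodule ℝ (Fin 6 → ℝ)) : Set (Fin 6 → ℝ))) := by
  have hrel : ∀ r : Fin 6 → ℤ, ∑ j, (r j : ℝ) * l₁ ^ (j : ℕ) = 0 → r = 0 := by
    have hli := linearIndependent_int_pow_of_irreducible hirr h₁
    rw [hdeg] at hli
    exact fun r hr => funext (Fintype.linearIndependent_iff.1 hli r (by simpa [zsmul_eq_mul]))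
  set f₁ : Fin 6 → ℝ := fun j => l₁ ^ (j : ℕ)
  set f₂ : Fin 6 → ℝ := fun j => l₂ ^ (j : ℕ)
  have hdense := dense_sup_intLattice (Submodule.span ℝ {f₁, f₂})
    fun r hr => hrel r (hr f₁ (Submodule.subset_span (Set.mem_insert _ _)))
  refine ⟨fun ⟨r, hr0, hr, _⟩ => hr0 (hrel r hr), hdense.mono ?_, dense_torusProj_image _ hdense⟩
  intro x hx
  obtain ⟨v, hv, _, ⟨p, rfl⟩, rfl⟩ := AddSubgroup.mem_sup.1 hx
  obtain ⟨t₁, t₂, rfl⟩ := Submodule.mem_span_pair.1 hv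
  exact ⟨t₁, t₂, -p, by ext j; simp [sub_eq_add_neg]⟩

/-- For two distinct real roots `λ₁ ≠ λ₂` of a monic irreducible sextic over `ℚ`, no nonzero
integer vector is orthogonal to both `(1, λᵢ, …, λᵢ⁵)`; consequently the plane they span is
dense modulo `ℤ⁶` (equivalently, its projection to the torus `T⁶` is dense). -/
theorem no_resonance_real_roots (Q : Polynomial ℤ) (hmonic : Q.Monic) (hdeg : Q.natDegree = 6)
    (hirr : Irreducible (Q.map (Int.castRingHom ℚ)))
    (l₁ l₂ : ℝ) (hne : l₁ ≠ l₂)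
    (h₁ : (Q.map (Int.castRingHom ℝ)).IsRoot l₁)
    (h₂ : (Q.map (Int.castRingHom ℝ)).IsRoot l₂) :
    (¬∃ r : Fin 6 → ℤ, r ≠ 0 ∧ (∑ j, (r j : ℝ) * l₁ ^ (j : ℕ)) = 0 ∧
        (∑ j, (r j : ℝ) * l₂ ^ (j : ℕ)) = 0) ∧
    Dense {x : Fin 6 → ℝ | ∃ (t₁ t₂ : ℝ) (p : Fin 6 → ℤ),
        x = (t₁ • fun j : Fin 6 => l₁ ^ (j : ℕ)) + (t₂ • fun j : Fin 6 => l₂ ^ (j : ℕ))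
          - fun j => (p j : ℝ)} ∧
    Dense (torusProj 6 ''
      ((Submodule.span ℝ {(fun j : Fin 6 => l₁ ^ (j : ℕ)), (fun j : Fin 6 => l₂ ^ (j : ℕ))} :
        Submodule ℝ (Fin 6 → ℝ)) : Set (Fin 6 → ℝ))) :=
  no_resonance_real_roots_general Q hdeg hirr l₁ l₂ h₁
end
end
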